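/- arXiv:2406.06047 — 2 statements merged into one kernel-verified Lean document; each statement's English description precedes it below -/
import Mathlib

section
/- The lapse-Wick-rotated metric is a rank-one perturbation with a metric-dependent covector in every foliation (Proposition 2, matrix form): let θ ∈ ℝ, ε ∈ {−1,+1}, let (N, n, ĝ) be real ADM data, let J be a Jacobian, and assume D_ε² ≠ 0 and D_θ² ≠ 0, so both the transf_ε-primed triple (N'², n', ĝ') and the lapse-Wick-rotated primed triple (λ'_θ, n'_θ, ĝ'^θ) are defined. Let κ ∈ ℝ^{d+1} be the zeroth row of K = J⁻¹, i.e. κ_μ := K₀_μ for μ = 0,1,…,d. Then A(−1, λ'_θ, n'_θ, ĝ'^θ) = A(ε, N'², n', ĝ') − (ε + e^{−2iθ}) N² κ κᵀ, an equality of (d+1)×(d+1) complex matrices (κκᵀ denoting the rank-one outer product). -/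
open Matrix Complex BigOperators

noncomputable section

/-- The ADM matrix `A(ε, λ, n, ĝ)` representing the line element
`ε λ dt² + ĝ_{ab}(dx^a + n^a dt)(dx^b + n^b dt)`. -/
def ADM {R : Type*} [CommRing R] {d : ℕ} (ε lam : R) (n : Fin d → R)
    (g : Matrix (Fin d) (Fin d) R) : Matrix (Fin (d+1)) (Fin (d+1)) R :=
  Matrix.of fun i j =>
    Fin.cases
      (Fin.cases (ε * lam + ∑ a, ∑ b, g a b * n a * n b)
        (fun a => ∑ b, g a b * n b) j)
      (fun a => Fin.cases (∑ b, g a b * n b) (fun b => g a b) j) i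

variable {d : ℕ}

/-- Block `τ = ∂t'/∂t` of a Jacobian. -/
def tauJ (J : Matrix (Fin (d+1)) (Fin (d+1)) ℝ) : ℝ := J 0 0

/-- Block `σ_c = ∂t'/∂x^c` of a Jacobian. -/
def sigJ (J : Matrix (Fin (d+1)) (Fin (d+1)) ℝ) : Fin d → ℝ := fun c => J 0 c.succ

/-- Block `ρ^a = ∂x'^a/∂t` of a Jacobian. -/
def rhoJ (J : Matrix (Fin (d+1)) (Fin (d+1)) ℝ) : Fin d → ℝ := fun a => J a.succ 0

/-- Block `X^a_c = ∂x'^a/∂x^c` of a Jacobian. -/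
def XJ (J : Matrix (Fin (d+1)) (Fin (d+1)) ℝ) : Matrix (Fin d) (Fin d) ℝ :=
  Matrix.of fun a c => J a.succ c.succ

/-- Block `k_a = (J⁻¹)₀ₐ` of the inverse Jacobian. -/
def kJ (J : Matrix (Fin (d+1)) (Fin (d+1)) ℝ) : Fin d → ℝ := fun a => J⁻¹ 0 a.succ

/-- Block `K^c_a = (J⁻¹)_{ca}` of the inverse Jacobian. -/
def KJ (J : Matrix (Fin (d+1)) (Fin (d+1)) ℝ) : Matrix (Fin d) (Fin d) ℝ :=
  Matrix.of fun c a => J⁻¹ c.succ a.succ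

/-- `C = τ - Σ_c σ_c n^c`. -/
def CJ (J : Matrix (Fin (d+1)) (Fin (d+1)) ℝ) (n : Fin d → ℝ) : ℝ :=
  tauJ J - ∑ c, sigJ J c * n c

/-- `σᵀ ĝ⁻¹ σ`. -/
def sgsJ (J : Matrix (Fin (d+1)) (Fin (d+1)) ℝ) (g : Matrix (Fin d) (Fin d) ℝ) : ℝ :=
  ∑ c, ∑ e, sigJ J c * g⁻¹ c e * sigJ J e

/-- `(X ĝ⁻¹ σ)^a`. -/
def Xgs (J : Matrix (Fin (d+1)) (Fin (d+1)) ℝ) (g : Matrix (Fin d) (Fin d) ℝ) :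
    Fin d → ℝ := fun a => ∑ c, ∑ e, XJ J a c * g⁻¹ c e * sigJ J e

/-- `(ρ - X n)^a`. -/
def rXn (J : Matrix (Fin (d+1)) (Fin (d+1)) ℝ) (n : Fin d → ℝ) : Fin d → ℝ :=
  fun a => rhoJ J a - ∑ c, XJ J a c * n c

/-- `D_ε² = C² + ε N² σᵀĝ⁻¹σ`. -/
def Deps2 (J : Matrix (Fin (d+1)) (Fin (d+1)) ℝ) (ε N : ℝ) (n : Fin d → ℝ)
    (g : Matrix (Fin d) (Fin d) ℝ) : ℝ :=
  (CJ J n)^2 + ε * N^2 * sgsJ J g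

/-- transf_ε primed squared lapse `N'² = N²/D_ε²`. -/
def NP2 (J : Matrix (Fin (d+1)) (Fin (d+1)) ℝ) (ε N : ℝ) (n : Fin d → ℝ)
    (g : Matrix (Fin d) (Fin d) ℝ) : ℝ := N^2 / Deps2 J ε N n g

/-- transf_ε primed shift `n'^a`. -/
def shiftP (J : Matrix (Fin (d+1)) (Fin (d+1)) ℝ) (ε N : ℝ) (n : Fin d → ℝ)
    (g : Matrix (Fin d) (Fin d) ℝ) : Fin d → ℝ := fun a =>
  -((rXn J n a) * CJ J n + ε * N^2 * Xgs J g a) / Deps2 J ε N n g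

/-- transf_ε primed spatial metric `ĝ'_{ab}`. -/
def ghP (J : Matrix (Fin (d+1)) (Fin (d+1)) ℝ) (ε N : ℝ) (n : Fin d → ℝ)
    (g : Matrix (Fin d) (Fin d) ℝ) : Matrix (Fin d) (Fin d) ℝ :=
  Matrix.of fun a b =>
    (∑ c, ∑ e, (KJ J c a + kJ J a * n c) * (KJ J e b + kJ J b * n e) * g c e)
    + ε * N^2 * kJ J a * kJ J b

/-- The Wick phase `e^{-2iθ}`. -/
def wick (θ : ℝ) : ℂ := Complex.exp (-2 * Complex.I * θ)

/-- `D_θ² = C² - e^{-2iθ} N² σᵀĝ⁻¹σ`. -/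
def Dth2 (J : Matrix (Fin (d+1)) (Fin (d+1)) ℝ) (θ N : ℝ) (n : Fin d → ℝ)
    (g : Matrix (Fin d) (Fin d) ℝ) : ℂ :=
  (CJ J n : ℂ)^2 - wick θ * (N:ℂ)^2 * (sgsJ J g : ℂ)

/-- lapse-Wick-rotated primed squared lapse `λ'_θ = e^{-2iθ}N²/D_θ²`. -/
def lamW (J : Matrix (Fin (d+1)) (Fin (d+1)) ℝ) (θ N : ℝ) (n : Fin d → ℝ)
    (g : Matrix (Fin d) (Fin d) ℝ) : ℂ :=
  wick θ * (N:ℂ)^2 / Dth2 J θ N n g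

/-- lapse-Wick-rotated primed shift `n'_θ{}^a`. -/
def shiftW (J : Matrix (Fin (d+1)) (Fin (d+1)) ℝ) (θ N : ℝ) (n : Fin d → ℝ)
    (g : Matrix (Fin d) (Fin d) ℝ) : Fin d → ℂ := fun a =>
  -((rXn J n a : ℂ) * (CJ J n : ℂ) - wick θ * (N:ℂ)^2 * (Xgs J g a : ℂ)) / Dth2 J θ N n g

/-- lapse-Wick-rotated primed spatial metric `(ĝ'^θ)_{ab}`. -/
def ghW (J : Matrix (Fin (d+1)) (Fin (d+1)) ℝ) (θ N : ℝ) (n : Fin d → ℝ)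
    (g : Matrix (Fin d) (Fin d) ℝ) : Matrix (Fin d) (Fin d) ℂ :=
  Matrix.of fun a b =>
    ((∑ c, ∑ e, (KJ J c a + kJ J a * n c) * (KJ J e b + kJ J b * n e) * g c e : ℝ) : ℂ)
    - wick θ * (N:ℂ)^2 * (kJ J a : ℂ) * (kJ J b : ℂ)


private lemma sum_split {R : Type*} [CommRing R] {d : ℕ} (A B Z : Fin d → R) (t : R) :
    ∑ b, (A b + B b * t) * Z b = (∑ b, A b * Z b) + (∑ b, B b * Z b) * t := by
  rw [Finset.sum_mul, ← Finset.sum_add_distrib]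
  exact Finset.sum_congr rfl fun b _ => by ring

private lemma sum_single' {R : Type*} [CommRing R] {d : ℕ} (A : Fin d → R)
    (X : Fin d → Fin d → R) (w : Fin d → R) :
    ∑ b, A b * (∑ c, X b c * w c) = ∑ c, (∑ b, A b * X b c) * w c := by
  have h : ∀ b, A b * (∑ c, X b c * w c) = ∑ c, (A b * X b c) * w c := by
    intro b; rw [Finset.mul_sum]; exact Finset.sum_congr rfl fun c _ => by ring
  rw [Finset.sum_congr rfl fun b _ => h b, Finset.sum_comm]
  exact Finset.sum_congr rfl fun c _ => (Finset.sum_mul _ _ _).symm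

private lemma sum_single {R : Type*} [CommRing R] {d : ℕ} (A P : Fin d → R)
    (X : Fin d → Fin d → R) (w : Fin d → R) :
    ∑ b, A b * (P b - ∑ c, X b c * w c)
      = (∑ b, A b * P b) - ∑ c, (∑ b, A b * X b c) * w c := by
  have h : ∀ b, A b * (P b - ∑ c, X b c * w c)
      = A b * P b - A b * (∑ c, X b c * w c) := fun b => by ring
  rw [Finset.sum_congr rfl fun b _ => h b, Finset.sum_sub_distrib, sum_single']

private lemma sum_lin {d : ℕ} (f r x : Fin d → ℂ) (C μ : ℂ) :
    ∑ b, f b * (r b * C + μ * x b) = (∑ b, f b * r b) * C + μ * ∑ b, f b * x b := by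
  rw [Finset.sum_mul, Finset.mul_sum, ← Finset.sum_add_distrib]
  exact Finset.sum_congr rfl fun b _ => by ring

private lemma sum_swap3 {R : Type*} [CommRing R] {d : ℕ} (F : Fin d → Fin d → Fin d → R) :
    ∑ b, ∑ c, ∑ e, F b c e = ∑ c, ∑ e, ∑ b, F b c e := by
  rw [Finset.sum_comm]; exact Finset.sum_congr rfl fun c _ => Finset.sum_comm

private lemma keyT {d : ℕ} (M G : Fin d → Fin d → ℂ) (v : Fin d → ℂ) (a : Fin d) :
    ∑ b, (∑ c, ∑ e, M c a * M e b * G c e) * v b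
      = ∑ c, ∑ e, (M c a * G c e) * (∑ b, M e b * v b) := by
  simp only [Finset.sum_mul]
  rw [sum_swap3]
  refine Finset.sum_congr rfl fun c _ => Finset.sum_congr rfl fun e _ => ?_
  rw [Finset.mul_sum]
  exact Finset.sum_congr rfl fun b _ => by ring

section key
variable {d : ℕ} (M G : Fin d → Fin d → ℂ) (k r x y σv u : Fin d → ℂ) (C s κ0 μ : ℂ)

private lemma keyTv
    (hMr : ∀ e, ∑ b, M e b * r b = -(u e) * C)
    (hMx : ∀ e, ∑ b, M e b * x b = y e - u e * s)
    (hGy : ∀ c, ∑ e, G c e * y e = σv c)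
    (hMσ : ∀ a, ∑ c, σv c * M c a = -(k a) * C) (a : Fin d) :
    ∑ b, (∑ c, ∑ e, M c a * M e b * G c e) * (r b * C + μ * x b)
      = -(C^2 + μ * s) * (∑ c, ∑ e, M c a * G c e * u e) - μ * (k a * C) := by
  have hv : ∀ e, ∑ b, M e b * (r b * C + μ * x b) = -(u e) * (C^2 + μ * s) + μ * y e := by
    intro e; rw [sum_lin, hMr, hMx]; ring
  rw [keyT]
  have h1 : ∀ c, ∑ e, (M c a * G c e) * (∑ b, M e b * (r b * C + μ * x b))
      = -(C^2 + μ * s) * (∑ e, M c a * G c e * u e) + μ * (M c a * σv c) := by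
    intro c
    have h2 : ∀ e, (M c a * G c e) * (∑ b, M e b * (r b * C + μ * x b))
        = -(C^2 + μ * s) * (M c a * G c e * u e) + μ * (M c a * (G c e * y e)) := by
      intro e; rw [hv]; ring
    rw [Finset.sum_congr rfl fun e _ => h2 e, Finset.sum_add_distrib, ← Finset.mul_sum,
      ← Finset.mul_sum, ← Finset.mul_sum, hGy]
  rw [Finset.sum_congr rfl fun c _ => h1 c, Finset.sum_add_distrib, ← Finset.mul_sum,
    ← Finset.mul_sum]
  have h3 : ∑ c, M c a * σv c = -(k a) * C := by
    rw [← hMσ a]; exact Finset.sum_congr rfl fun c _ => by ring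
  rw [h3]; ring

private lemma key1
    (hMr : ∀ e, ∑ b, M e b * r b = -(u e) * C)
    (hMx : ∀ e, ∑ b, M e b * x b = y e - u e * s)
    (hkr : ∑ b, k b * r b = 1 - κ0 * C)
    (hkx : ∑ b, k b * x b = -κ0 * s)
    (hGy : ∀ c, ∑ e, G c e * y e = σv c)
    (hMσ : ∀ a, ∑ c, σv c * M c a = -(k a) * C) (a : Fin d) :
    ∑ b, ((∑ c, ∑ e, M c a * M e b * G c e) + μ * k a * k b) * (-(r b * C + μ * x b))
      = ((∑ c, ∑ e, M c a * G c e * u e) + μ * κ0 * k a) * (C^2 + μ * s) := by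
  have hkv : ∑ b, k b * (r b * C + μ * x b) = C - κ0 * (C^2 + μ * s) := by
    rw [sum_lin, hkr, hkx]; ring
  have hTv := keyTv M G k r x y σv u C s μ hMr hMx hGy hMσ a
  have hsplit : ∑ b, ((∑ c, ∑ e, M c a * M e b * G c e) + μ * k a * k b) * (-(r b * C + μ * x b))
      = -(∑ b, (∑ c, ∑ e, M c a * M e b * G c e) * (r b * C + μ * x b))
          - (μ * k a) * ∑ b, k b * (r b * C + μ * x b) := by
    rw [Finset.mul_sum, ← Finset.sum_neg_distrib, ← Finset.sum_sub_distrib]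
    exact Finset.sum_congr rfl fun b _ => by ring
  rw [hsplit, hTv, hkv]; ring

private lemma key2
    (hGsym : ∀ c e, G c e = G e c)
    (hMr : ∀ e, ∑ b, M e b * r b = -(u e) * C)
    (hMx : ∀ e, ∑ b, M e b * x b = y e - u e * s)
    (hkr : ∑ b, k b * r b = 1 - κ0 * C)
    (hkx : ∑ b, k b * x b = -κ0 * s)
    (hGy : ∀ c, ∑ e, G c e * y e = σv c)
    (hMσ : ∀ a, ∑ c, σv c * M c a = -(k a) * C)
    (hσu : ∑ c, σv c * u c = 1 - κ0 * C) :
    μ * (C^2 + μ * s)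
      + ∑ a, ∑ b, ((∑ c, ∑ e, M c a * M e b * G c e) + μ * k a * k b)
          * (r a * C + μ * x a) * (r b * C + μ * x b)
      = ((∑ c, ∑ e, G c e * u c * u e) + μ * κ0^2) * (C^2 + μ * s)^2 := by
  have hv : ∀ e, ∑ b, M e b * (r b * C + μ * x b) = -(u e) * (C^2 + μ * s) + μ * y e := by
    intro e; rw [sum_lin, hMr, hMx]; ring
  have hkv : ∑ b, k b * (r b * C + μ * x b) = C - κ0 * (C^2 + μ * s) := by
    rw [sum_lin, hkr, hkx]; ring
  have hinner : ∀ a, ∑ b, ((∑ c, ∑ e, M c a * M e b * G c e) + μ * k a * k b)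
        * (r a * C + μ * x a) * (r b * C + μ * x b)
      = (r a * C + μ * x a) * (-(C^2 + μ * s))
          * ((∑ c, ∑ e, M c a * G c e * u e) + μ * κ0 * k a) := by
    intro a
    have hTv := keyTv M G k r x y σv u C s μ hMr hMx hGy hMσ a
    have h0 : ∀ b, ((∑ c, ∑ e, M c a * M e b * G c e) + μ * k a * k b)
          * (r a * C + μ * x a) * (r b * C + μ * x b)
        = (r a * C + μ * x a) * ((∑ c, ∑ e, M c a * M e b * G c e) * (r b * C + μ * x b))
          + ((r a * C + μ * x a) * (μ * k a)) * (k b * (r b * C + μ * x b)) := fun b => by ring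
    rw [Finset.sum_congr rfl fun b _ => h0 b, Finset.sum_add_distrib, ← Finset.mul_sum,
      ← Finset.mul_sum, hTv, hkv]
    ring
  rw [Finset.sum_congr rfl fun a _ => hinner a]
  have hre : ∑ a, (r a * C + μ * x a) * (-(C^2 + μ * s))
        * ((∑ c, ∑ e, M c a * G c e * u e) + μ * κ0 * k a)
      = -(C^2 + μ * s) * ((∑ a, (∑ c, ∑ e, M c a * G c e * u e) * (r a * C + μ * x a))
          + (μ * κ0) * (∑ a, k a * (r a * C + μ * x a))) := by
    rw [Finset.mul_sum, ← Finset.sum_add_distrib, Finset.mul_sum]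
    exact Finset.sum_congr rfl fun a _ => by ring
  have hQv : ∑ a, (∑ c, ∑ e, M c a * G c e * u e) * (r a * C + μ * x a)
      = -(C^2 + μ * s) * (∑ c, ∑ e, G c e * u c * u e) + μ * (1 - κ0 * C) := by
    have hre2 : ∑ a, (∑ c, ∑ e, M c a * G c e * u e) * (r a * C + μ * x a)
        = ∑ c, ∑ e, (G c e * u e) * (∑ a, M c a * (r a * C + μ * x a)) := by
      simp only [Finset.sum_mul]
      rw [sum_swap3]
      refine Finset.sum_congr rfl fun c _ => Finset.sum_congr rfl fun e _ => ?_
      rw [Finset.mul_sum]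
      exact Finset.sum_congr rfl fun a _ => by ring
    rw [hre2]
    have h1 : ∀ c, ∑ e, (G c e * u e) * (∑ a, M c a * (r a * C + μ * x a))
        = -(C^2 + μ * s) * (∑ e, G c e * u c * u e) + μ * ∑ e, (G c e * y c) * u e := by
      intro c
      have h2 : ∀ e, (G c e * u e) * (∑ a, M c a * (r a * C + μ * x a))
          = -(C^2 + μ * s) * (G c e * u c * u e) + μ * ((G c e * y c) * u e) := by
        intro e; rw [hv c]; ring
      rw [Finset.sum_congr rfl fun e _ => h2 e, Finset.sum_add_distrib, ← Finset.mul_sum,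
        ← Finset.mul_sum]
    rw [Finset.sum_congr rfl fun c _ => h1 c, Finset.sum_add_distrib, ← Finset.mul_sum,
      ← Finset.mul_sum]
    have h3 : ∑ c, ∑ e, (G c e * y c) * u e = 1 - κ0 * C := by
      rw [Finset.sum_comm]
      have h4 : ∀ e, ∑ c, (G c e * y c) * u e = σv e * u e := by
        intro e
        rw [← Finset.sum_mul]
        congr 1
        rw [← hGy e]
        exact Finset.sum_congr rfl fun c _ => by rw [hGsym c e]
      rw [Finset.sum_congr rfl fun e _ => h4 e, hσu]
    rw [h3]
  rw [hre, hQv, hkv]; ring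

private lemma entry0a {D : ℂ} (hD : D = C^2 + μ * s) (hDne : D ≠ 0)
    (hMr : ∀ e, ∑ b, M e b * r b = -(u e) * C)
    (hMx : ∀ e, ∑ b, M e b * x b = y e - u e * s)
    (hkr : ∑ b, k b * r b = 1 - κ0 * C)
    (hkx : ∑ b, k b * x b = -κ0 * s)
    (hGy : ∀ c, ∑ e, G c e * y e = σv c)
    (hMσ : ∀ a, ∑ c, σv c * M c a = -(k a) * C) (a : Fin d) :
    ∑ b, ((∑ c, ∑ e, M c a * M e b * G c e) + μ * k a * k b) * (-(r b * C + μ * x b) / D)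
      = (∑ c, ∑ e, M c a * G c e * u e) + μ * κ0 * k a := by
  have h0 : ∀ b, ((∑ c, ∑ e, M c a * M e b * G c e) + μ * k a * k b) * (-(r b * C + μ * x b) / D)
      = (((∑ c, ∑ e, M c a * M e b * G c e) + μ * k a * k b) * (-(r b * C + μ * x b))) * D⁻¹ := by
    intro b; rw [div_eq_mul_inv]; ring
  rw [Finset.sum_congr rfl fun b _ => h0 b, ← Finset.sum_mul,
    key1 M G k r x y σv u C s κ0 μ hMr hMx hkr hkx hGy hMσ a, ← hD]
  field_simp

private lemma entry00 {D : ℂ} (hD : D = C^2 + μ * s) (hDne : D ≠ 0)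
    (hGsym : ∀ c e, G c e = G e c)
    (hMr : ∀ e, ∑ b, M e b * r b = -(u e) * C)
    (hMx : ∀ e, ∑ b, M e b * x b = y e - u e * s)
    (hkr : ∑ b, k b * r b = 1 - κ0 * C)
    (hkx : ∑ b, k b * x b = -κ0 * s)
    (hGy : ∀ c, ∑ e, G c e * y e = σv c)
    (hMσ : ∀ a, ∑ c, σv c * M c a = -(k a) * C)
    (hσu : ∑ c, σv c * u c = 1 - κ0 * C) :
    μ / D + ∑ a, ∑ b, ((∑ c, ∑ e, M c a * M e b * G c e) + μ * k a * k b)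
        * (-(r a * C + μ * x a) / D) * (-(r b * C + μ * x b) / D)
      = (∑ c, ∑ e, G c e * u c * u e) + μ * κ0^2 := by
  have h0 : ∀ a, ∑ b, ((∑ c, ∑ e, M c a * M e b * G c e) + μ * k a * k b)
        * (-(r a * C + μ * x a) / D) * (-(r b * C + μ * x b) / D)
      = (∑ b, ((∑ c, ∑ e, M c a * M e b * G c e) + μ * k a * k b)
          * (r a * C + μ * x a) * (r b * C + μ * x b)) * (D⁻¹ * D⁻¹) := by
    intro a
    rw [Finset.sum_mul]
    refine Finset.sum_congr rfl fun b _ => ?_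
    rw [div_eq_mul_inv, div_eq_mul_inv]; ring
  rw [Finset.sum_congr rfl fun a _ => h0 a, ← Finset.sum_mul]
  have K2 := key2 M G k r x y σv u C s κ0 μ hGsym hMr hMx hkr hkx hGy hMσ hσu
  rw [← hD] at K2
  have hsum : ∑ a, ∑ b, ((∑ c, ∑ e, M c a * M e b * G c e) + μ * k a * k b)
      * (r a * C + μ * x a) * (r b * C + μ * x b)
      = ((∑ c, ∑ e, G c e * u c * u e) + μ * κ0^2) * D^2 - μ * D := by
    linear_combination K2
  rw [hsum]
  field_simp
  ring
end key


section auxdefs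
variable {d : ℕ}

private def MCf (J : Matrix (Fin (d+1)) (Fin (d+1)) ℝ) (n : Fin d → ℝ) (c a : Fin d) : ℂ :=
  (KJ J c a : ℂ) + (kJ J a : ℂ) * (n c : ℂ)

private def GCf (g : Matrix (Fin d) (Fin d) ℝ) (c e : Fin d) : ℂ := (g c e : ℂ)

private def kCf (J : Matrix (Fin (d+1)) (Fin (d+1)) ℝ) (a : Fin d) : ℂ := (kJ J a : ℂ)

private def rCf (J : Matrix (Fin (d+1)) (Fin (d+1)) ℝ) (n : Fin d → ℝ) (b : Fin d) : ℂ :=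
  (rXn J n b : ℂ)

private def xCf (J : Matrix (Fin (d+1)) (Fin (d+1)) ℝ) (g : Matrix (Fin d) (Fin d) ℝ)
    (b : Fin d) : ℂ := (Xgs J g b : ℂ)

private def yCf (J : Matrix (Fin (d+1)) (Fin (d+1)) ℝ) (g : Matrix (Fin d) (Fin d) ℝ)
    (e : Fin d) : ℂ := ((∑ f, g⁻¹ e f * sigJ J f : ℝ) : ℂ)

private def sCf (J : Matrix (Fin (d+1)) (Fin (d+1)) ℝ) (c : Fin d) : ℂ := (sigJ J c : ℂ)

private def uCf (J : Matrix (Fin (d+1)) (Fin (d+1)) ℝ) (n : Fin d → ℝ) (e : Fin d) : ℂ :=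
  ((J⁻¹ e.succ 0 : ℝ) : ℂ) + ((J⁻¹ 0 0 : ℝ) : ℂ) * (n e : ℂ)

private lemma Xgs_eq (J : Matrix (Fin (d+1)) (Fin (d+1)) ℝ) (g : Matrix (Fin d) (Fin d) ℝ)
    (a : Fin d) : Xgs J g a = ∑ c, XJ J a c * (∑ e, g⁻¹ c e * sigJ J e) := by
  rw [Xgs]
  refine Finset.sum_congr rfl fun c _ => ?_
  rw [Finset.mul_sum]
  exact Finset.sum_congr rfl fun e _ => by ring

private lemma sgs_eq (J : Matrix (Fin (d+1)) (Fin (d+1)) ℝ) (g : Matrix (Fin d) (Fin d) ℝ) :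
    sgsJ J g = ∑ c, sigJ J c * (∑ e, g⁻¹ c e * sigJ J e) := by
  rw [sgsJ]
  refine Finset.sum_congr rfl fun c _ => ?_
  rw [Finset.mul_sum]
  exact Finset.sum_congr rfl fun e _ => by ring

end auxdefs

/-- Proposition 2 (matrix form): the lapse-Wick-rotated metric in any foliation is a
rank-one perturbation of the real ADM metric with the metric-dependent covector
`κ_μ = (J⁻¹)₀_μ`. -/
theorem lapse_wick_rank_one (d : ℕ) (hd : 1 ≤ d) (θ : ℝ) (ε : ℝ) (hε : ε = -1 ∨ ε = 1)
    (N : ℝ) (hN : 0 < N) (n : Fin d → ℝ)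
    (g : Matrix (Fin d) (Fin d) ℝ) (hgs : g.IsSymm) (hg : g.PosDef)
    (J : Matrix (Fin (d+1)) (Fin (d+1)) ℝ) (hJ : IsUnit J.det)
    (hDe : Deps2 J ε N n g ≠ 0) (hDθ : Dth2 J θ N n g ≠ 0) :
    ADM (-1 : ℂ) (lamW J θ N n g) (shiftW J θ N n g) (ghW J θ N n g)
      = (ADM ε (NP2 J ε N n g) (shiftP J ε N n g) (ghP J ε N n g)).map Complex.ofReal
        - (((ε : ℂ) + wick θ) * (N:ℂ)^2) •
            Matrix.vecMulVec (fun μ => (J⁻¹ 0 μ : ℂ)) (fun μ => (J⁻¹ 0 μ : ℂ)) := by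
  classical
  -- inverse matrix entry relations
  have hKJm : J⁻¹ * J = 1 := Matrix.nonsing_inv_mul J hJ
  have hJKm : J * J⁻¹ = 1 := Matrix.mul_nonsing_inv J hJ
  have hgdet : IsUnit g.det := isUnit_iff_ne_zero.mpr (ne_of_gt hg.det_pos)
  have hgg : g * g⁻¹ = 1 := Matrix.mul_nonsing_inv g hgdet
  have entryKJ : ∀ i j, J⁻¹ i 0 * J 0 j + ∑ b : Fin d, J⁻¹ i b.succ * J b.succ j
      = if i = j then (1:ℝ) else 0 := by
    intro i j
    have h : (J⁻¹ * J) i j = (1 : Matrix (Fin (d+1)) (Fin (d+1)) ℝ) i j := by rw [hKJm]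
    rwa [Matrix.mul_apply, Fin.sum_univ_succ, Matrix.one_apply] at h
  have entryJK : ∀ i j, J i 0 * J⁻¹ 0 j + ∑ c : Fin d, J i c.succ * J⁻¹ c.succ j
      = if i = j then (1:ℝ) else 0 := by
    intro i j
    have h : (J * J⁻¹) i j = (1 : Matrix (Fin (d+1)) (Fin (d+1)) ℝ) i j := by rw [hJKm]
    rwa [Matrix.mul_apply, Fin.sum_univ_succ, Matrix.one_apply] at h
  have Rgg : ∀ c f : Fin d, ∑ e, g c e * g⁻¹ e f = if c = f then (1:ℝ) else 0 := by
    intro c f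
    have h : (g * g⁻¹) c f = (1 : Matrix (Fin d) (Fin d) ℝ) c f := by rw [hgg]
    rwa [Matrix.mul_apply, Matrix.one_apply] at h
  have RKρ : ∀ e : Fin d, ∑ b : Fin d, J⁻¹ e.succ b.succ * J b.succ 0 = -(J⁻¹ e.succ 0 * J 0 0) := by
    intro e
    have h := entryKJ e.succ 0
    rw [if_neg (Fin.succ_ne_zero e)] at h
    linarith
  have Rkρ : ∑ b : Fin d, J⁻¹ 0 b.succ * J b.succ 0 = 1 - J⁻¹ 0 0 * J 0 0 := by
    have h := entryKJ 0 0
    rw [if_pos rfl] at h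
    linarith
  have RKX : ∀ e c : Fin d, ∑ b : Fin d, J⁻¹ e.succ b.succ * J b.succ c.succ
      = (if e = c then (1:ℝ) else 0) - J⁻¹ e.succ 0 * J 0 c.succ := by
    intro e c
    have h := entryKJ e.succ c.succ
    simp only [Fin.succ_inj] at h
    linarith [h]
  have RkX : ∀ c : Fin d, ∑ b : Fin d, J⁻¹ 0 b.succ * J b.succ c.succ = -(J⁻¹ 0 0 * J 0 c.succ) := by
    intro c
    have h := entryKJ 0 c.succ
    rw [if_neg (Fin.succ_ne_zero c).symm] at h
    linarith
  have RJk : ∀ a : Fin d, ∑ c : Fin d, J 0 c.succ * J⁻¹ c.succ a.succ = -(J 0 0 * J⁻¹ 0 a.succ) := by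
    intro a
    have h := entryJK 0 a.succ
    rw [if_neg (Fin.succ_ne_zero a).symm] at h
    linarith
  have RJκ : ∑ c : Fin d, J 0 c.succ * J⁻¹ c.succ 0 = 1 - J 0 0 * J⁻¹ 0 0 := by
    have h := entryJK 0 0
    rw [if_pos rfl] at h
    linarith
  -- real-level structural identities
  have H1R : ∀ e, ∑ b, (KJ J e b + kJ J b * n e) * rXn J n b
      = -(J⁻¹ e.succ 0 + J⁻¹ 0 0 * n e) * CJ J n := by
    intro e
    simp only [KJ, kJ, rXn, rhoJ, XJ, sigJ, CJ, tauJ, Matrix.of_apply]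
    rw [sum_split, sum_single, sum_single, RKρ e, Rkρ]
    simp only [RKX e, RkX]
    simp only [sub_mul, ite_mul, one_mul, zero_mul, neg_mul, Finset.sum_sub_distrib,
      Finset.sum_ite_eq, Finset.mem_univ, if_true, Finset.sum_neg_distrib, mul_assoc,
      ← Finset.mul_sum]
    ring
  have H2R : ∀ e, ∑ b, (KJ J e b + kJ J b * n e) * Xgs J g b
      = (∑ f, g⁻¹ e f * sigJ J f) - (J⁻¹ e.succ 0 + J⁻¹ 0 0 * n e) * sgsJ J g := by
    intro e
    simp only [Xgs_eq]
    simp only [KJ, kJ, XJ, sigJ, Matrix.of_apply]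
    rw [sum_split,
      sum_single' (fun b => J⁻¹ e.succ b.succ) (fun b c => J b.succ c.succ)
        (fun c => ∑ f, g⁻¹ c f * J 0 f.succ),
      sum_single' (fun b => J⁻¹ 0 b.succ) (fun b c => J b.succ c.succ)
        (fun c => ∑ f, g⁻¹ c f * J 0 f.succ)]
    simp only [RKX e, RkX]
    rw [sgs_eq J g]
    simp only [sigJ]
    simp only [sub_mul, ite_mul, one_mul, zero_mul, neg_mul, Finset.sum_sub_distrib,
      Finset.sum_ite_eq, Finset.mem_univ, if_true, Finset.sum_neg_distrib, mul_assoc,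
      ← Finset.mul_sum]
    ring
  have H3R : ∑ b, kJ J b * rXn J n b = 1 - J⁻¹ 0 0 * CJ J n := by
    simp only [kJ, rXn, rhoJ, XJ, sigJ, CJ, tauJ, Matrix.of_apply]
    rw [sum_single, Rkρ]
    simp only [RkX]
    simp only [neg_mul, Finset.sum_neg_distrib, mul_assoc, ← Finset.mul_sum]
    ring
  have H4R : ∑ b, kJ J b * Xgs J g b = -(J⁻¹ 0 0) * sgsJ J g := by
    simp only [Xgs_eq]
    simp only [kJ, XJ, sigJ, Matrix.of_apply]
    rw [sum_single']
    simp only [RkX]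
    rw [sgs_eq J g]
    simp only [sigJ]
    simp only [neg_mul, Finset.sum_neg_distrib, mul_assoc, ← Finset.mul_sum]
  have H5R : ∀ c, ∑ e, g c e * (∑ f, g⁻¹ e f * sigJ J f) = sigJ J c := by
    intro c
    rw [sum_single' (fun e => g c e) (fun e f => g⁻¹ e f) (fun f => sigJ J f)]
    simp only [Rgg]
    simp only [ite_mul, one_mul, zero_mul, Finset.sum_ite_eq, Finset.mem_univ, if_true]
  have H6R : ∀ a, ∑ c, sigJ J c * (KJ J c a + kJ J a * n c) = -(kJ J a) * CJ J n := by
    intro a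
    simp only [KJ, kJ, sigJ, CJ, tauJ, Matrix.of_apply]
    have hsp : ∑ c : Fin d, J 0 c.succ * (J⁻¹ c.succ a.succ + J⁻¹ 0 a.succ * n c)
        = (∑ c : Fin d, J 0 c.succ * J⁻¹ c.succ a.succ) + J⁻¹ 0 a.succ * ∑ c : Fin d, J 0 c.succ * n c := by
      rw [Finset.mul_sum, ← Finset.sum_add_distrib]
      exact Finset.sum_congr rfl fun c _ => by ring
    rw [hsp, RJk a]
    ring
  have H7R : ∑ c, sigJ J c * (J⁻¹ c.succ 0 + J⁻¹ 0 0 * n c) = 1 - J⁻¹ 0 0 * CJ J n := by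
    simp only [sigJ, CJ, tauJ]
    have hsp : ∑ c : Fin d, J 0 c.succ * (J⁻¹ c.succ 0 + J⁻¹ 0 0 * n c)
        = (∑ c : Fin d, J 0 c.succ * J⁻¹ c.succ 0) + J⁻¹ 0 0 * ∑ c : Fin d, J 0 c.succ * n c := by
      rw [Finset.mul_sum, ← Finset.sum_add_distrib]
      exact Finset.sum_congr rfl fun c _ => by ring
    rw [hsp, RJκ]
    ring
  -- complex-cast versions
  have H1C : ∀ e, ∑ b, MCf J n e b * rCf J n b = -(uCf J n e) * ((CJ J n : ℝ) : ℂ) := by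
    intro e
    simp only [MCf, rCf, uCf]
    exact_mod_cast H1R e
  have H2C : ∀ e, ∑ b, MCf J n e b * xCf J g b
      = yCf J g e - uCf J n e * ((sgsJ J g : ℝ) : ℂ) := by
    intro e
    simp only [MCf, xCf, yCf, uCf]
    exact_mod_cast H2R e
  have H3C : ∑ b, kCf J b * rCf J n b = 1 - ((J⁻¹ 0 0 : ℝ) : ℂ) * ((CJ J n : ℝ) : ℂ) := by
    simp only [kCf, rCf]
    exact_mod_cast H3R
  have H4C : ∑ b, kCf J b * xCf J g b = -((J⁻¹ 0 0 : ℝ) : ℂ) * ((sgsJ J g : ℝ) : ℂ) := by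
    simp only [kCf, xCf]
    exact_mod_cast H4R
  have H5C : ∀ c, ∑ e, GCf g c e * yCf J g e = sCf J c := by
    intro c
    simp only [GCf, yCf, sCf]
    exact_mod_cast H5R c
  have H6C : ∀ a, ∑ c, sCf J c * MCf J n c a = -(kCf J a) * ((CJ J n : ℝ) : ℂ) := by
    intro a
    simp only [sCf, MCf, kCf]
    exact_mod_cast H6R a
  have H7C : ∑ c, sCf J c * uCf J n c = 1 - ((J⁻¹ 0 0 : ℝ) : ℂ) * ((CJ J n : ℝ) : ℂ) := by
    simp only [sCf, uCf]
    exact_mod_cast H7R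
  have HGsymC : ∀ c e, GCf g c e = GCf g e c := by
    intro c e
    simp only [GCf]
    have : g c e = g e c := by
      calc g c e = gᵀ e c := rfl
        _ = g e c := by rw [hgs]
    exact_mod_cast this
  -- denominators
  have hDθeq : Dth2 J θ N n g
      = ((CJ J n : ℝ) : ℂ)^2 + -(wick θ * (N:ℂ)^2) * ((sgsJ J g : ℝ) : ℂ) := by
    rw [Dth2]; ring
  have hDεC : ((Deps2 J ε N n g : ℝ) : ℂ)
      = ((CJ J n : ℝ) : ℂ)^2 + (ε:ℂ) * (N:ℂ)^2 * ((sgsJ J g : ℝ) : ℂ) := by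
    simp only [Deps2]
    push_cast
    ring
  have hDεne : ((Deps2 J ε N n g : ℝ) : ℂ) ≠ 0 := Complex.ofReal_ne_zero.mpr hDe
  -- the primed-entry evaluations
  have W0a := fun a => entry0a (MCf J n) (GCf g) (kCf J) (rCf J n) (xCf J g) (yCf J g)
    (sCf J) (uCf J n) ((CJ J n : ℝ) : ℂ) ((sgsJ J g : ℝ) : ℂ) ((J⁻¹ 0 0 : ℝ) : ℂ)
    (-(wick θ * (N:ℂ)^2)) hDθeq hDθ H1C H2C H3C H4C H5C H6C a
  have P0a := fun a => entry0a (MCf J n) (GCf g) (kCf J) (rCf J n) (xCf J g) (yCf J g)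
    (sCf J) (uCf J n) ((CJ J n : ℝ) : ℂ) ((sgsJ J g : ℝ) : ℂ) ((J⁻¹ 0 0 : ℝ) : ℂ)
    ((ε:ℂ) * (N:ℂ)^2) hDεC hDεne H1C H2C H3C H4C H5C H6C a
  have W00 := entry00 (MCf J n) (GCf g) (kCf J) (rCf J n) (xCf J g) (yCf J g)
    (sCf J) (uCf J n) ((CJ J n : ℝ) : ℂ) ((sgsJ J g : ℝ) : ℂ) ((J⁻¹ 0 0 : ℝ) : ℂ)
    (-(wick θ * (N:ℂ)^2)) hDθeq hDθ HGsymC H1C H2C H3C H4C H5C H6C H7C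
  have P00 := entry00 (MCf J n) (GCf g) (kCf J) (rCf J n) (xCf J g) (yCf J g)
    (sCf J) (uCf J n) ((CJ J n : ℝ) : ℂ) ((sgsJ J g : ℝ) : ℂ) ((J⁻¹ 0 0 : ℝ) : ℂ)
    ((ε:ℂ) * (N:ℂ)^2) hDεC hDεne HGsymC H1C H2C H3C H4C H5C H6C H7C
  -- per-term translations
  have TW1 : ∀ a b : Fin d, ghW J θ N n g a b * shiftW J θ N n g b
      = ((∑ c, ∑ e, MCf J n c a * MCf J n e b * GCf g c e)
          + -(wick θ * (N:ℂ)^2) * kCf J a * kCf J b)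
        * (-(rCf J n b * ((CJ J n : ℝ) : ℂ) + -(wick θ * (N:ℂ)^2) * xCf J g b)
            / Dth2 J θ N n g) := by
    intro a b
    simp only [ghW, shiftW, Matrix.of_apply, MCf, GCf, kCf, rCf, xCf]
    push_cast
    ring
  have TW2 : ∀ a b : Fin d, ghW J θ N n g a b * shiftW J θ N n g a * shiftW J θ N n g b
      = ((∑ c, ∑ e, MCf J n c a * MCf J n e b * GCf g c e)
          + -(wick θ * (N:ℂ)^2) * kCf J a * kCf J b)
        * (-(rCf J n a * ((CJ J n : ℝ) : ℂ) + -(wick θ * (N:ℂ)^2) * xCf J g a)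
            / Dth2 J θ N n g)
        * (-(rCf J n b * ((CJ J n : ℝ) : ℂ) + -(wick θ * (N:ℂ)^2) * xCf J g b)
            / Dth2 J θ N n g) := by
    intro a b
    simp only [ghW, shiftW, Matrix.of_apply, MCf, GCf, kCf, rCf, xCf]
    push_cast
    ring
  have TP1 : ∀ a b : Fin d, ((ghP J ε N n g a b : ℝ) : ℂ) * ((shiftP J ε N n g b : ℝ) : ℂ)
      = ((∑ c, ∑ e, MCf J n c a * MCf J n e b * GCf g c e)
          + (ε:ℂ) * (N:ℂ)^2 * kCf J a * kCf J b)
        * (-(rCf J n b * ((CJ J n : ℝ) : ℂ) + (ε:ℂ) * (N:ℂ)^2 * xCf J g b)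
            / ((Deps2 J ε N n g : ℝ) : ℂ)) := by
    intro a b
    simp only [ghP, shiftP, Matrix.of_apply, MCf, GCf, kCf, rCf, xCf]
    push_cast
    ring
  have TP2 : ∀ a b : Fin d, ((ghP J ε N n g a b : ℝ) : ℂ) * ((shiftP J ε N n g a : ℝ) : ℂ)
        * ((shiftP J ε N n g b : ℝ) : ℂ)
      = ((∑ c, ∑ e, MCf J n c a * MCf J n e b * GCf g c e)
          + (ε:ℂ) * (N:ℂ)^2 * kCf J a * kCf J b)
        * (-(rCf J n a * ((CJ J n : ℝ) : ℂ) + (ε:ℂ) * (N:ℂ)^2 * xCf J g a)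
            / ((Deps2 J ε N n g : ℝ) : ℂ))
        * (-(rCf J n b * ((CJ J n : ℝ) : ℂ) + (ε:ℂ) * (N:ℂ)^2 * xCf J g b)
            / ((Deps2 J ε N n g : ℝ) : ℂ)) := by
    intro a b
    simp only [ghP, shiftP, Matrix.of_apply, MCf, GCf, kCf, rCf, xCf]
    push_cast
    ring
  -- entrywise proof
  ext i j
  simp only [Matrix.sub_apply, Matrix.map_apply, Matrix.smul_apply, Matrix.vecMulVec_apply,
    smul_eq_mul, ADM, Matrix.of_apply]
  induction i using Fin.cases with
  | zero =>
    induction j using Fin.cases with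
    | zero =>
      simp only [Fin.cases_zero]
      rw [Finset.sum_congr rfl fun a _ => Finset.sum_congr rfl fun b _ => TW2 a b]
      rw [show (-1:ℂ) * lamW J θ N n g
          = -(wick θ * (N:ℂ)^2) / Dth2 J θ N n g from by rw [lamW]; ring]
      rw [W00]
      rw [show ((ε * NP2 J ε N n g + ∑ a, ∑ b, ghP J ε N n g a b * shiftP J ε N n g a
              * shiftP J ε N n g b : ℝ) : ℂ)
          = (ε:ℂ) * (N:ℂ)^2 / ((Deps2 J ε N n g : ℝ) : ℂ)
            + ∑ a, ∑ b, ((∑ c, ∑ e, MCf J n c a * MCf J n e b * GCf g c e)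
                + (ε:ℂ) * (N:ℂ)^2 * kCf J a * kCf J b)
              * (-(rCf J n a * ((CJ J n : ℝ) : ℂ) + (ε:ℂ) * (N:ℂ)^2 * xCf J g a)
                  / ((Deps2 J ε N n g : ℝ) : ℂ))
              * (-(rCf J n b * ((CJ J n : ℝ) : ℂ) + (ε:ℂ) * (N:ℂ)^2 * xCf J g b)
                  / ((Deps2 J ε N n g : ℝ) : ℂ)) from by
        push_cast
        rw [Finset.sum_congr rfl fun a _ => Finset.sum_congr rfl fun b _ => TP2 a b]
        congr 1
        simp only [NP2]
        push_cast
        ring]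
      rw [P00]
      ring
    | succ b =>
      simp only [Fin.cases_zero, Fin.cases_succ]
      rw [Finset.sum_congr rfl fun b' _ => TW1 b b']
      rw [W0a b]
      rw [show ((∑ b', ghP J ε N n g b b' * shiftP J ε N n g b' : ℝ) : ℂ)
          = ∑ b', ((∑ c, ∑ e, MCf J n c b * MCf J n e b' * GCf g c e)
                + (ε:ℂ) * (N:ℂ)^2 * kCf J b * kCf J b')
              * (-(rCf J n b' * ((CJ J n : ℝ) : ℂ) + (ε:ℂ) * (N:ℂ)^2 * xCf J g b')
                  / ((Deps2 J ε N n g : ℝ) : ℂ)) from by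
        push_cast
        rw [Finset.sum_congr rfl fun b' _ => TP1 b b']]
      rw [P0a b]
      simp only [kCf, kJ]
      ring
  | succ a =>
    induction j using Fin.cases with
    | zero =>
      simp only [Fin.cases_zero, Fin.cases_succ]
      rw [Finset.sum_congr rfl fun b' _ => TW1 a b']
      rw [W0a a]
      rw [show ((∑ b', ghP J ε N n g a b' * shiftP J ε N n g b' : ℝ) : ℂ)
          = ∑ b', ((∑ c, ∑ e, MCf J n c a * MCf J n e b' * GCf g c e)
                + (ε:ℂ) * (N:ℂ)^2 * kCf J a * kCf J b')
              * (-(rCf J n b' * ((CJ J n : ℝ) : ℂ) + (ε:ℂ) * (N:ℂ)^2 * xCf J g b')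
                  / ((Deps2 J ε N n g : ℝ) : ℂ)) from by
        push_cast
        rw [Finset.sum_congr rfl fun b' _ => TP1 a b']]
      rw [P0a a]
      simp only [kCf, kJ]
      ring
    | succ b =>
      simp only [Fin.cases_succ]
      simp only [ghW, ghP, Matrix.of_apply, kJ]
      push_cast
      ring
end
end

section
/- Covariance of the real ADM metric under foliation-changing diffeomorphisms (Eqs. (2.7)–(2.8), matrix form): let ε ∈ {−1,+1}, let (N, n, ĝ) be real ADM data, let J be a Jacobian, and assume D_ε² ≠ 0, so the transf_ε-primed triple (N'², n', ĝ') is defined. Then Jᵀ · A(ε, N'², n', ĝ') · J = A(ε, N², n, ĝ), an equality of real (d+1)×(d+1) matrices; i.e., the primed ADM triple represents the same bilinear form in the new foliation as the original triple in the old one. -/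
open Matrix Complex BigOperators

noncomputable section

variable {d : ℕ}

/-!
Put `A := ADM ε N² n ĝ` and `M := J⁻ᵀ A J⁻¹`, the same bilinear form in the new coordinates.
A symmetric matrix `M` is the ADM matrix with spatial block `M_{ab}`, shift `m` and squared lapse
`λ` exactly when `M (1, -m) = ελ e₀`: lowering the normal direction `∂_t - m^a ∂_a` of the slices
gives `ελ dt`. The spatial block of `M` is `ĝ'` by expanding the line element. For the lapse and
shift, raise the differential `dt' = (τ, σ)` of the new time: `y := (C, εN² ĝ⁻¹σ - C n)` satisfies
`A y = εN² dt'`, and in the new coordinates `J y = D_ε² (1, -n')`. Hence `M (1, -n') = ε N'² e₀`.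
-/

section ADMMatrix

variable {R : Type*} [CommRing R] {d : ℕ}

/-- The components `dx^c + n^c dt` of a vector `(dt, dx)`. -/
def spatialPart (n : Fin d → R) (y : Fin (d+1) → R) : Fin d → R :=
  fun c => y c.succ + n c * y 0

theorem ADM_mulVec (ε lam : R) (n : Fin d → R) (g : Matrix (Fin d) (Fin d) R)
    (y : Fin (d+1) → R) :
    ADM ε lam n g *ᵥ y =
      Fin.cons (ε * lam * y 0 + (g *ᵥ n) ⬝ᵥ spatialPart n y) (g *ᵥ spatialPart n y) := by
  funext i
  induction i using Fin.cases with
  | zero =>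
    simp only [mulVec, dotProduct, ADM, of_apply, Fin.sum_univ_succ, Fin.cases_zero,
      Fin.cases_succ, Fin.cons_zero, spatialPart, add_mul, Finset.sum_mul, mul_add,
      Finset.sum_add_distrib]
    rw [add_assoc, add_comm (∑ x, ∑ i, g x i * n x * n i * y 0)]
    congr 2
    exact Finset.sum_congr rfl fun _ _ => Finset.sum_congr rfl fun _ _ => by ring
  | succ a =>
    simp only [mulVec, dotProduct, ADM, of_apply, Fin.sum_univ_succ, Fin.cases_zero,
      Fin.cases_succ, Fin.cons_succ, spatialPart, mul_add, Finset.sum_mul, Finset.sum_add_distrib]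
    rw [add_comm]
    congr 1
    exact Finset.sum_congr rfl fun _ _ => by ring

theorem dotProduct_ADM_mulVec (ε lam : R) (n : Fin d → R) {g : Matrix (Fin d) (Fin d) R}
    (hg : g.IsSymm) (x y : Fin (d+1) → R) :
    x ⬝ᵥ (ADM ε lam n g *ᵥ y) =
      ε * lam * x 0 * y 0 + spatialPart n x ⬝ᵥ (g *ᵥ spatialPart n y) := by
  have hsym : (g *ᵥ n) ⬝ᵥ spatialPart n y = n ⬝ᵥ (g *ᵥ spatialPart n y) := by
    rw [dotProduct_mulVec, ← mulVec_transpose, hg.eq]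
  rw [ADM_mulVec, hsym]
  simp only [dotProduct, Fin.sum_univ_succ, Fin.cons_zero, Fin.cons_succ, spatialPart,
    add_mul, Finset.sum_add_distrib, mul_add, Finset.mul_sum]
  rw [Finset.sum_congr rfl fun c _ => mul_left_comm (x 0) (n c) _]
  simp only [mul_assoc]
  ring

theorem ADM_isSymm (ε lam : R) (n : Fin d → R) {g : Matrix (Fin d) (Fin d) R} (hg : g.IsSymm) :
    (ADM ε lam n g).IsSymm := by
  refine IsSymm.ext fun i j => ?_
  induction i using Fin.cases <;> induction j using Fin.cases <;>
    simp [ADM, hg.apply]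

theorem eq_ADM_of_mulVec {M : Matrix (Fin (d+1)) (Fin (d+1)) R} (hM : M.IsSymm)
    (ε lam : R) (m : Fin d → R)
    (h : M *ᵥ Fin.cons 1 (-m) = Pi.single 0 (ε * lam)) :
    M = ADM ε lam m (M.submatrix Fin.succ Fin.succ) := by
  have hrow : ∀ i, M i 0 = ∑ b, M i b.succ * m b + (Pi.single 0 (ε * lam) : Fin (d+1) → R) i := by
    intro i
    have := congrFun h i
    simp only [mulVec, dotProduct, Fin.sum_univ_succ, Fin.cons_zero, Fin.cons_succ,
      Pi.neg_apply, mul_one, mul_neg, Finset.sum_neg_distrib] at this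
    linear_combination this
  ext i j
  induction i using Fin.cases with
  | zero =>
    induction j using Fin.cases with
    | zero =>
      have hcol : ∀ b : Fin d, M 0 b.succ = ∑ a, M b.succ a.succ * m a := fun b => by
        simpa [hM.apply] using hrow b.succ
      simp only [ADM, of_apply, Fin.cases_zero, submatrix_apply, hrow 0, hcol,
        Pi.single_eq_same, Finset.sum_mul]
      rw [add_comm]
      congr 1
      exact Finset.sum_congr rfl fun _ _ => Finset.sum_congr rfl fun _ _ => by ring
    | succ b => simpa [ADM, hM.apply] using hrow b.succ
  | succ a =>
    induction j using Fin.cases with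
    | zero => simpa [ADM] using hrow a.succ
    | succ b => simp [ADM]

theorem transpose_mul_mul_apply {l m n o : Type*} [Fintype l] [Fintype n]
    (A : Matrix l m R) (B : Matrix l n R) (C : Matrix n o R) (i : m) (j : o) :
    (Aᵀ * B * C) i j = (fun p => A p i) ⬝ᵥ (B *ᵥ fun q => C q j) := by
  rw [Matrix.mul_assoc, mul_apply']
  rfl

end ADMMatrix

section Jacobian

variable {d : ℕ} (J : Matrix (Fin (d+1)) (Fin (d+1)) ℝ) (ε N : ℝ) (n : Fin d → ℝ)
  (g : Matrix (Fin d) (Fin d) ℝ)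

theorem CJ_eq_sub_dotProduct : CJ J n = tauJ J - sigJ J ⬝ᵥ n := rfl

theorem rXn_eq_sub_mulVec : rXn J n = rhoJ J - XJ J *ᵥ n := rfl

theorem sgsJ_eq_dotProduct_mulVec : sgsJ J g = sigJ J ⬝ᵥ (g⁻¹ *ᵥ sigJ J) := by
  simp only [sgsJ, dotProduct, mulVec, Finset.mul_sum, mul_assoc]

theorem Xgs_eq_mulVec : Xgs J g = XJ J *ᵥ (g⁻¹ *ᵥ sigJ J) := by
  funext a
  simp only [Xgs, dotProduct, mulVec, Finset.mul_sum, mul_assoc]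

theorem mulVec_finCons (y₀ : ℝ) (v : Fin d → ℝ) :
    J *ᵥ Fin.cons y₀ v = Fin.cons (tauJ J * y₀ + sigJ J ⬝ᵥ v) (y₀ • rhoJ J + XJ J *ᵥ v) := by
  funext i
  induction i using Fin.cases <;>
    simp [mulVec, dotProduct, Fin.sum_univ_succ, tauJ, sigJ, rhoJ, XJ, mul_comm]

/-- `ε N² A⁻¹ (τ, σ)`: the raised differential of the new time coordinate, scaled by `ε N²`. -/
def newTimeGradient : Fin (d+1) → ℝ :=
  Fin.cons (CJ J n) ((ε * N^2) • (g⁻¹ *ᵥ sigJ J) - CJ J n • n)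

theorem spatialPart_newTimeGradient :
    spatialPart n (newTimeGradient J ε N n g) = (ε * N^2) • (g⁻¹ *ᵥ sigJ J) := by
  funext c
  simp only [spatialPart, newTimeGradient, Fin.cons_succ, Fin.cons_zero, Pi.sub_apply,
    Pi.smul_apply, smul_eq_mul]
  ring

theorem ADM_mulVec_newTimeGradient {g : Matrix (Fin d) (Fin d) ℝ} (hgs : g.IsSymm)
    (hg : IsUnit g.det) :
    ADM ε (N^2) n g *ᵥ newTimeGradient J ε N n g = (ε * N^2) • J 0 := by
  have hgn : g *ᵥ n = n ᵥ* g := by rw [← vecMul_transpose, hgs.eq]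
  rw [ADM_mulVec, spatialPart_newTimeGradient, mulVec_smul, mulVec_mulVec,
    mul_nonsing_inv _ hg, one_mulVec, dotProduct_smul, hgn, ← dotProduct_mulVec,
    mulVec_mulVec, mul_nonsing_inv _ hg, one_mulVec]
  funext i
  induction i using Fin.cases with
  | zero =>
    simp only [Pi.smul_apply, smul_eq_mul, newTimeGradient, Fin.cons_zero, CJ, tauJ, sigJ,
      dotProduct]
    rw [Finset.sum_congr rfl fun c _ => mul_comm (n c) (J 0 c.succ)]
    ring
  | succ a => simp [sigJ]

theorem mulVec_newTimeGradient (hD : Deps2 J ε N n g ≠ 0) :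
    J *ᵥ newTimeGradient J ε N n g = Deps2 J ε N n g • Fin.cons 1 (-shiftP J ε N n g) := by
  rw [newTimeGradient, mulVec_finCons]
  funext i
  induction i using Fin.cases with
  | zero =>
    simp only [Fin.cons_zero, Pi.smul_apply, smul_eq_mul, dotProduct_sub, dotProduct_smul,
      ← sgsJ_eq_dotProduct_mulVec, Deps2, CJ_eq_sub_dotProduct]
    ring
  | succ a =>
    simp only [Fin.cons_succ, Pi.smul_apply, Pi.neg_apply, Pi.add_apply, smul_eq_mul,
      mulVec_sub, mulVec_smul, Pi.sub_apply, shiftP, mul_neg, mul_div_cancel₀ _ hD,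
      ← Xgs_eq_mulVec, rXn_eq_sub_mulVec]
    ring

def newCoordADM : Matrix (Fin (d+1)) (Fin (d+1)) ℝ := (J⁻¹)ᵀ * ADM ε (N^2) n g * J⁻¹

theorem newCoordADM_isSymm {g : Matrix (Fin d) (Fin d) ℝ} (hgs : g.IsSymm) :
    (newCoordADM J ε N n g).IsSymm := by
  simp [newCoordADM, IsSymm, transpose_mul, (ADM_isSymm ε (N^2) n hgs).eq, Matrix.mul_assoc]

theorem newCoordADM_submatrix_succ {g : Matrix (Fin d) (Fin d) ℝ} (hgs : g.IsSymm) :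
    (newCoordADM J ε N n g).submatrix Fin.succ Fin.succ = ghP J ε N n g := by
  ext a b
  rw [submatrix_apply, newCoordADM, transpose_mul_mul_apply, dotProduct_ADM_mulVec _ _ _ hgs]
  simp only [ghP, of_apply, spatialPart, KJ, kJ, dotProduct, mulVec, Finset.mul_sum]
  rw [add_comm]
  congr 1
  exact Finset.sum_congr rfl fun _ _ => Finset.sum_congr rfl fun _ _ => by ring

theorem newCoordADM_mulVec_normal {g : Matrix (Fin d) (Fin d) ℝ} (hgs : g.IsSymm)
    (hg : IsUnit g.det) (hJ : IsUnit J.det) (hD : Deps2 J ε N n g ≠ 0) :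
    newCoordADM J ε N n g *ᵥ Fin.cons 1 (-shiftP J ε N n g) =
      Pi.single 0 (ε * NP2 J ε N n g) := by
  have hcancel : J⁻¹ *ᵥ (J *ᵥ newTimeGradient J ε N n g) = newTimeGradient J ε N n g := by
    rw [mulVec_mulVec, nonsing_inv_mul _ hJ, one_mulVec]
  have hrow : (J⁻¹)ᵀ *ᵥ J 0 = Pi.single 0 1 := by
    rw [mulVec_transpose, show J 0 = Pi.single 0 1 ᵥ* J from (single_one_vecMul 0 J).symm,
      vecMul_vecMul, mul_nonsing_inv _ hJ, vecMul_one]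
  refine smul_right_injective _ hD ?_
  calc Deps2 J ε N n g • (newCoordADM J ε N n g *ᵥ Fin.cons 1 (-shiftP J ε N n g))
      = (J⁻¹)ᵀ *ᵥ (ADM ε (N^2) n g *ᵥ (J⁻¹ *ᵥ (J *ᵥ newTimeGradient J ε N n g))) := by
        simp only [newCoordADM, mulVec_newTimeGradient J ε N n g hD, mulVec_smul, mulVec_mulVec,
          Matrix.mul_assoc]
    _ = (ε * N^2) • Pi.single 0 1 := by
        rw [hcancel, ADM_mulVec_newTimeGradient J ε N n hgs hg, mulVec_smul, hrow]
    _ = Deps2 J ε N n g • Pi.single 0 (ε * NP2 J ε N n g) := by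
        rw [← Pi.single_smul, ← Pi.single_smul, NP2, smul_eq_mul, smul_eq_mul, mul_one]
        field_simp

theorem newCoordADM_eq {g : Matrix (Fin d) (Fin d) ℝ} (hgs : g.IsSymm) (hg : IsUnit g.det)
    (hJ : IsUnit J.det) (hD : Deps2 J ε N n g ≠ 0) :
    newCoordADM J ε N n g = ADM ε (NP2 J ε N n g) (shiftP J ε N n g) (ghP J ε N n g) := by
  rw [← newCoordADM_submatrix_succ J ε N n hgs]
  exact eq_ADM_of_mulVec (newCoordADM_isSymm J ε N n hgs) _ _ _
    (newCoordADM_mulVec_normal J ε N n hgs hg hJ hD)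

end Jacobian

theorem adm_covariance_general (d : ℕ) (ε : ℝ)
    (N : ℝ) (n : Fin d → ℝ)
    (g : Matrix (Fin d) (Fin d) ℝ) (hgs : g.IsSymm) (hg : g.PosDef)
    (J : Matrix (Fin (d+1)) (Fin (d+1)) ℝ) (hJ : IsUnit J.det)
    (hD : Deps2 J ε N n g ≠ 0) :
    Jᵀ * ADM ε (NP2 J ε N n g) (shiftP J ε N n g) (ghP J ε N n g) * J
      = ADM ε (N^2) n g := by
  have hg' : IsUnit g.det := isUnit_iff_ne_zero.mpr hg.det_pos.ne'
  rw [← newCoordADM_eq J ε N n hgs hg' hJ hD, newCoordADM, Matrix.mul_assoc,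
    J.nonsing_inv_mul_cancel_right _ hJ, ← Matrix.mul_assoc, ← transpose_mul,
    nonsing_inv_mul _ hJ, transpose_one, Matrix.one_mul]

/-- Eqs. (2.7)-(2.8) (matrix form): covariance of the real ADM metric under
foliation-changing diffeomorphisms. -/
theorem adm_covariance (d : ℕ) (hd : 1 ≤ d) (ε : ℝ) (hε : ε = -1 ∨ ε = 1)
    (N : ℝ) (hN : 0 < N) (n : Fin d → ℝ)
    (g : Matrix (Fin d) (Fin d) ℝ) (hgs : g.IsSymm) (hg : g.PosDef)
    (J : Matrix (Fin (d+1)) (Fin (d+1)) ℝ) (hJ : IsUnit J.det)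
    (hD : Deps2 J ε N n g ≠ 0) :
    Jᵀ * ADM ε (NP2 J ε N n g) (shiftP J ε N n g) (ghP J ε N n g) * J
      = ADM ε (N^2) n g :=
  adm_covariance_general d ε N n g hgs hg J hJ hD
end
end
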